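/- Let G be a chordal graph with an expanded tree model whose host tree T is rooted at r, and let u', w' be vertices with u' < w' and u'w' ∈ E(G). If vertex u'' ∈ V_{u'} is adjacent in G to a vertex b outside V_{u'}, then the root r(u') of T_{u'} belongs to V(T_b); in particular b is adjacent to u'. -/
import Mathlib


/-- Descendant order in a rooted tree given by a parent function
(edges directed toward the root). -/
def Desc {N : Type*} (parent : N → N) : N → N → Prop :=
  Relation.ReflTransGen (fun a b => b = parent a)

/-- A tree model of a graph `G` on a rooted host tree: each vertex `v`
corresponds to a subtree `Sub v` with root `root v` (the node of `Sub v`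
closest to the root of the host tree), and adjacency in `G` is exactly
intersection of the subtrees. -/
structure TreeModel (V N : Type*) where
  parent : N → N
  acyclic : ∀ x y : N, Desc parent x y → Desc parent y x → x = y
  G : SimpleGraph V
  Sub : V → Set N
  root : V → N
  root_mem : ∀ v : V, root v ∈ Sub v
  root_max : ∀ v : V, ∀ x ∈ Sub v, Desc parent x (root v)
  convex : ∀ v : V, ∀ x y : N, x ∈ Sub v → Desc parent x y →
    Desc parent y (root v) → y ∈ Sub v
  adj_iff : ∀ u v : V, u ≠ v → (G.Adj u v ↔ (Sub u ∩ Sub v).Nonempty)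

namespace TreeModel

variable {V N : Type*}

/-- `u ≤ v` iff `r(u)` is a descendant of `r(v)`. -/
def vle (M : TreeModel V N) (u v : V) : Prop :=
  Desc M.parent (M.root u) (M.root v)

/-- `u < v` iff `r(u)` is a strict descendant of `r(v)`. -/
def vlt (M : TreeModel V N) (u v : V) : Prop :=
  M.vle u v ∧ M.root u ≠ M.root v

/-- `V_u = {w : w ≤ u}`. -/
def Vset (M : TreeModel V N) (u : V) : Set V := {w | M.vle w u}

/-- The maximal proper predecessors `◁u` of `u`. -/
def maxPreds (M : TreeModel V N) (u : V) : Set V :=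
  {w | w ∈ M.Vset u \ {u} ∧ ∀ z ∈ M.Vset u \ {u}, M.vle w z → z = w}

end TreeModel

lemma desc_iterate {N : Type*} (parent : N → N) (n : ℕ) (x : N) :
    Desc parent x (parent^[n] x) := by
  induction n with
  | zero => exact Relation.ReflTransGen.refl
  | succ n ih =>
    exact ih.tail (by rw [Function.iterate_succ_apply'])

lemma desc_exists_iterate {N : Type*} (parent : N → N) {x y : N}
    (h : Desc parent x y) : ∃ n, y = parent^[n] x := by
  induction h with
  | refl => exact ⟨0, rfl⟩
  | tail _ hstep ih =>
    obtain ⟨n, rfl⟩ := ih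
    exact ⟨n + 1, by rw [hstep, Function.iterate_succ_apply']⟩

lemma desc_total {N : Type*} (parent : N → N) {x y z : N}
    (hy : Desc parent x y) (hz : Desc parent x z) :
    Desc parent y z ∨ Desc parent z y := by
  obtain ⟨m, rfl⟩ := desc_exists_iterate parent hy
  obtain ⟨n, rfl⟩ := desc_exists_iterate parent hz
  rcases le_total m n with h | h
  · left
    obtain ⟨k, rfl⟩ := Nat.exists_eq_add_of_le h
    rw [Nat.add_comm, Function.iterate_add_apply]
    exact desc_iterate parent k _
  · right
    obtain ⟨k, rfl⟩ := Nat.exists_eq_add_of_le h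
    rw [Nat.add_comm, Function.iterate_add_apply]
    exact desc_iterate parent k _

/-- If `u'' ∈ V_{u'}` is adjacent to `b ∉ V_{u'}`, then `r(u') ∈ V(T_b)` and
in particular `b` is adjacent to `u'`. -/
theorem stmt18 {V N : Type*} (M : TreeModel V N)
    (hexp : Function.Injective M.root)
    (u' w' : V) (hlt : M.vlt u' w') (hadj : M.G.Adj u' w')
    (u'' b : V) (h1 : u'' ∈ M.Vset u') (h2 : b ∉ M.Vset u')
    (h3 : M.G.Adj u'' b) :
    M.root u' ∈ M.Sub b ∧ M.G.Adj b u' := by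
  have hne : u'' ≠ b := h3.ne
  obtain ⟨x, hxu, hxb⟩ := (M.adj_iff u'' b hne).mp h3
  have hx1 : Desc M.parent x (M.root u') :=
    (M.root_max u'' x hxu).trans h1
  have hx2 : Desc M.parent x (M.root b) := M.root_max b x hxb
  have hdesc : Desc M.parent (M.root u') (M.root b) := by
    rcases desc_total M.parent hx1 hx2 with h | h
    · exact h
    · exact absurd h h2
  have hroot : M.root u' ∈ M.Sub b := M.convex b x _ hxb hx1 hdesc
  refine ⟨hroot, ?_⟩
  have hbne : b ≠ u' := by
    rintro rfl
    exact h2 Relation.ReflTransGen.refl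
  exact (M.adj_iff b u' hbne).mpr ⟨M.root u', hroot, M.root_mem u'⟩
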